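/- arXiv:math/0408398 — 2 statements merged into one kernel-verified Lean document; each statement's English description precedes it below -/
import Mathlib

section
/- For all integers m ≥ 1 and n ≥ 1, the extended Bernoulli numbers can be expressed via the classical ones: C_{m,n} = ∑_{k=0}^{m-1} C(m, k) · B_{n+k}, where C(m,k) denotes the binomial coefficient. -/
open Finset

private def DD (b q : ℕ) : ℚ := ∑ r ∈ Finset.range b, (b.choose r : ℚ) * bernoulli (q + r)

private def AA (b q : ℕ) : ℚ := ∑ r ∈ Finset.range (b + 1), (b.choose r : ℚ) * bernoulli (q + r)

private lemma AA_eq (b q : ℕ) : AA b q = DD b q + bernoulli (q + b) := by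
  unfold AA DD
  rw [Finset.sum_range_succ, Nat.choose_self]
  push_cast; ring

private lemma DD_zero (q : ℕ) : DD 0 q = 0 := by simp [DD]

private lemma DD_at0 (b : ℕ) : DD b 0 = if b = 1 then 1 else 0 := by
  simp [DD, sum_bernoulli]

private lemma full_shift (p : ℕ) (g : ℕ → ℚ) :
    (∑ i ∈ range (p + 1), (p.choose (i + 1) : ℚ) * g (i + 1)) + (p.choose 0 : ℚ) * g 0
      = ∑ i ∈ range (p + 1), (p.choose i : ℚ) * g i := by
  rw [← Finset.sum_range_succ' (fun i => (p.choose i : ℚ) * g i) (p + 1),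
    Finset.sum_range_succ]
  simp

private lemma pascal_sum (p : ℕ) (g : ℕ → ℚ) :
    ∑ i ∈ range (p + 2), ((p + 1).choose i : ℚ) * g i
      = ∑ i ∈ range (p + 1), (p.choose i : ℚ) * g i
        + ∑ i ∈ range (p + 1), (p.choose i : ℚ) * g (i + 1) := by
  rw [Finset.sum_range_succ' (fun i => ((p + 1).choose i : ℚ) * g i) (p + 1)]
  have h1 : ∀ i ∈ range (p + 1),
      ((p + 1).choose (i + 1) : ℚ) * g (i + 1)
        = (p.choose i : ℚ) * g (i + 1) + (p.choose (i + 1) : ℚ) * g (i + 1) := by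
    intro i _
    rw [Nat.choose_succ_succ]
    push_cast; ring
  rw [Finset.sum_congr rfl h1, Finset.sum_add_distrib]
  have h2 := full_shift p g
  simp only [Nat.choose_zero_right] at h2 ⊢
  rw [add_assoc, h2]
  ring

private lemma vander (b : ℕ) : ∀ (q : ℕ) (f : ℕ → ℚ),
    ∑ i ∈ range (q + 1), ∑ j ∈ range (b + 1),
        (q.choose i : ℚ) * (b.choose j : ℚ) * f (i + j)
      = ∑ u ∈ range (q + b + 1), ((q + b).choose u : ℚ) * f u := by
  intro q
  induction q with
  | zero => intro f; simp
  | succ q ih =>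
      intro f
      have hfac : ∀ i ∈ range (q + 2),
          ∑ j ∈ range (b + 1), ((q+1).choose i : ℚ) * (b.choose j : ℚ) * f (i + j)
            = ((q+1).choose i : ℚ) * ∑ j ∈ range (b + 1), (b.choose j : ℚ) * f (i + j) := by
        intro i _
        rw [Finset.mul_sum]
        exact Finset.sum_congr rfl fun j _ => by ring
      rw [Finset.sum_congr rfl hfac,
        pascal_sum q (fun i => ∑ j ∈ range (b + 1), (b.choose j : ℚ) * f (i + j))]
      have e1 : ∑ i ∈ range (q + 1), (q.choose i : ℚ) *
            ∑ j ∈ range (b + 1), (b.choose j : ℚ) * f (i + j)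
          = ∑ u ∈ range (q + b + 1), ((q + b).choose u : ℚ) * f u := by
        rw [← ih f]
        refine Finset.sum_congr rfl fun i _ => ?_
        rw [Finset.mul_sum]
        exact Finset.sum_congr rfl fun j _ => by ring
      have e2 : ∑ i ∈ range (q + 1), (q.choose i : ℚ) *
            ∑ j ∈ range (b + 1), (b.choose j : ℚ) * f (i + 1 + j)
          = ∑ u ∈ range (q + b + 1), ((q + b).choose u : ℚ) * f (u + 1) := by
        rw [← ih (fun u => f (u + 1))]
        refine Finset.sum_congr rfl fun i _ => ?_
        rw [Finset.mul_sum]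
        refine Finset.sum_congr rfl fun j _ => ?_
        have : i + 1 + j = i + j + 1 := by omega
        rw [this]; ring
      rw [e1, e2, ← pascal_sum (q + b) f]
      have h3 : q + 1 + b = q + b + 1 := by omega
      rw [h3]

private lemma full_sum_bernoulli (a : ℕ) :
    ∑ k ∈ range (a + 1), (a.choose k : ℚ) * bernoulli k
      = bernoulli a + (if a = 1 then 1 else 0) := by
  rw [Finset.sum_range_succ, sum_bernoulli, Nat.choose_self]
  push_cast; ring

private lemma tri (F : ℕ → ℕ → ℚ) : ∀ (M : ℕ),
    ∑ k ∈ range M, ∑ i ∈ range (k + 1), F k i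
      = ∑ i ∈ range M, ∑ l ∈ range (M - i), F (i + l) i := by
  intro M
  induction M with
  | zero => simp
  | succ M ih =>
      rw [Finset.sum_range_succ, ih]
      have key : ∀ i ∈ range (M + 1), ∑ l ∈ range (M + 1 - i), F (i + l) i
          = (∑ l ∈ range (M - i), F (i + l) i) + F M i := by
        intro i hi
        rw [mem_range] at hi
        have h1 : M + 1 - i = (M - i) + 1 := by omega
        rw [h1, Finset.sum_range_succ]
        have h2 : i + (M - i) = M := by omega
        rw [h2]
      rw [Finset.sum_congr rfl key, Finset.sum_add_distrib,
        Finset.sum_range_succ (fun i => ∑ l ∈ range (M - i), F (i + l) i) M]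
      simp

private lemma reflect_inner (F : ℕ → ℕ → ℚ) (k : ℕ) :
    ∑ i ∈ range (k + 1), F i (k - i) = ∑ i ∈ range (k + 1), F (k - i) i := by
  have h := Finset.sum_range_reflect (fun i => F i (k - i)) (k + 1)
  rw [← h]
  refine Finset.sum_congr rfl fun i hi => ?_
  rw [mem_range] at hi
  have h1 : k + 1 - 1 - i = k - i := by omega
  have h2 : k - (k - i) = i := by omega
  rw [h1, h2]

private lemma tri_swap (G : ℕ → ℕ → ℚ) (M : ℕ) :
    ∑ i ∈ range M, ∑ r ∈ range (M - i), G i r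
      = ∑ r ∈ range M, ∑ i ∈ range (M - r), G i r := by
  have h1 := tri (fun k i => G i (k - i)) M
  have h2 := tri (fun k i => G (k - i) i) M
  simp only [Nat.add_sub_cancel_left] at h1 h2
  rw [← h1, ← h2]
  exact Finset.sum_congr rfl fun k _ => reflect_inner G k

private lemma core1 (q m : ℕ) :
    ∑ r ∈ range (q + 1), ∑ s ∈ range m,
        (q.choose r : ℚ) * (m.choose s : ℚ) * bernoulli (r + s)
      = (if q + m = 1 then 1 else 0) - DD q m := by
  cases m with
  | zero =>
      simp only [range_zero, Finset.sum_empty, Finset.sum_const, smul_zero]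
      rw [DD_at0]
      simp
  | succ b =>
      have hsplit : ∀ r ∈ range (q + 1),
          ∑ s ∈ range (b + 1), (q.choose r : ℚ) * ((b+1).choose s : ℚ) * bernoulli (r + s)
            = (∑ s ∈ range (b + 2), (q.choose r : ℚ) * ((b+1).choose s : ℚ) * bernoulli (r + s))
              - (q.choose r : ℚ) * bernoulli (r + (b + 1)) := by
        intro r _
        rw [Finset.sum_range_succ (fun s => (q.choose r : ℚ) * ((b+1).choose s : ℚ) * bernoulli (r + s)) (b+1),
          Nat.choose_self]
        push_cast; ring
      rw [Finset.sum_congr rfl hsplit, Finset.sum_sub_distrib,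
        vander (b + 1) q (fun u => bernoulli u)]
      have e2 : ∑ r ∈ range (q + 1), (q.choose r : ℚ) * bernoulli (r + (b + 1))
          = AA q (b + 1) := by
        unfold AA
        exact Finset.sum_congr rfl fun r _ => by rw [Nat.add_comm r (b+1)]
      rw [e2, full_sum_bernoulli (q + (b + 1)), AA_eq]
      have h3 : b + 1 + q = q + (b + 1) := by omega
      rw [h3]
      ring

private lemma choose_tri {a i r : ℕ} (h : i + r ≤ a) :
    a.choose i * (a - i).choose r = a.choose r * (a - r).choose i := by
  have h1 := Nat.choose_mul (n := a) (k := i + r) (s := i) (Nat.le_add_right i r)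
  have h2 := Nat.choose_mul (n := a) (k := i + r) (s := r) (Nat.le_add_left r i)
  rw [Nat.add_sub_cancel_left] at h1
  rw [Nat.add_sub_cancel] at h2
  rw [← h1, ← h2, Nat.choose_symm_add]

private lemma core2 (a b : ℕ) :
    ∑ i ∈ range (a + 1), (a.choose i : ℚ) * bernoulli i * DD (a - i) (b + 1)
      = a * bernoulli (a + b) := by
  rw [Finset.sum_range_succ, Nat.sub_self, DD_zero, mul_zero, add_zero]
  have hexp : ∀ i ∈ range a,
      (a.choose i : ℚ) * bernoulli i * DD (a - i) (b + 1)
        = ∑ r ∈ range (a - i),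
            ((a.choose i : ℚ) * ((a - i).choose r : ℚ)) * (bernoulli i * bernoulli (b + 1 + r)) := by
    intro i _
    unfold DD
    rw [Finset.mul_sum]
    exact Finset.sum_congr rfl fun r _ => by ring
  rw [Finset.sum_congr rfl hexp,
    tri_swap (fun i r => ((a.choose i : ℚ) * ((a - i).choose r : ℚ)) * (bernoulli i * bernoulli (b + 1 + r))) a]
  have hinner : ∀ r ∈ range a,
      ∑ i ∈ range (a - r),
          ((a.choose i : ℚ) * ((a - i).choose r : ℚ)) * (bernoulli i * bernoulli (b + 1 + r))
        = (a.choose r : ℚ) * bernoulli (b + 1 + r)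
            * (if a - r = 1 then 1 else 0) := by
    intro r hr
    rw [mem_range] at hr
    have e1 : ∀ i ∈ range (a - r),
        ((a.choose i : ℚ) * ((a - i).choose r : ℚ)) * (bernoulli i * bernoulli (b + 1 + r))
          = ((a.choose r : ℚ) * bernoulli (b + 1 + r)) * (((a - r).choose i : ℚ) * bernoulli i) := by
      intro i hi
      rw [mem_range] at hi
      have h : i + r ≤ a := by omega
      have := choose_tri h
      have hc : (a.choose i : ℚ) * ((a - i).choose r : ℚ) = (a.choose r : ℚ) * ((a - r).choose i : ℚ) := by
        exact_mod_cast congrArg (fun x : ℕ => (x : ℚ)) this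
      rw [hc]; ring
    rw [Finset.sum_congr rfl e1, ← Finset.mul_sum, sum_bernoulli]
  rw [Finset.sum_congr rfl hinner]
  rcases Nat.eq_zero_or_pos a with ha | ha
  · subst ha; simp
  · have hain : a - 1 ∈ range a := by rw [mem_range]; omega
    rw [Finset.sum_eq_single_of_mem (a - 1) hain]
    · have h1 : a - (a - 1) = 1 := by omega
      rw [h1, if_pos rfl, mul_one]
      have h2 : a.choose (a - 1) = a := by
        rw [← Nat.choose_symm (by omega : a - 1 ≤ a)]
        have : a - (a - 1) = 1 := by omega
        rw [this, Nat.choose_one_right]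
      rw [h2]
      have h3 : b + 1 + (a - 1) = a + b := by omega
      rw [h3]
    · intro r hr hne
      rw [mem_range] at hr
      have : ¬ (a - r = 1) := by omega
      rw [if_neg this, mul_zero]

private lemma Vp (m n : ℕ) (hm : 1 ≤ m) :
    ∑ k ∈ range (n + 1), ((n + 1).choose k : ℚ) * bernoulli k * DD m (n + 1 - k)
      = -((n : ℚ) + 1) * AA m n := by
  set S : ℚ := ∑ k ∈ range (n + 2), ((n + 1).choose k : ℚ)
      * (∑ i ∈ range (k + 1), (k.choose i : ℚ) * bernoulli i) * DD m (n + 1 - k) with hS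
  have eval1 : S = (∑ k ∈ range (n + 1), ((n + 1).choose k : ℚ) * bernoulli k * DD m (n + 1 - k))
      + (if m = 1 then bernoulli (n + 1) else 0) + ((n : ℚ) + 1) * DD m n := by
    have h1 : ∀ k ∈ range (n + 2),
        ((n + 1).choose k : ℚ) * (∑ i ∈ range (k + 1), (k.choose i : ℚ) * bernoulli i)
            * DD m (n + 1 - k)
          = ((n + 1).choose k : ℚ) * bernoulli k * DD m (n + 1 - k)
            + ((n + 1).choose k : ℚ) * (if k = 1 then 1 else 0) * DD m (n + 1 - k) := by
      intro k _
      rw [full_sum_bernoulli k]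
      ring
    rw [hS, Finset.sum_congr rfl h1, Finset.sum_add_distrib]
    congr 1
    · rw [Finset.sum_range_succ, Nat.choose_self, Nat.sub_self, DD_at0]
      have : (((n+1).choose (n+1) : ℕ) : ℚ) = 1 := by rw [Nat.choose_self]; norm_num
      rcases eq_or_ne m 1 with h | h <;> simp [h]
    · rw [Finset.sum_eq_single_of_mem 1 (by rw [mem_range]; omega)]
      · simp [Nat.choose_one_right]
      · intro k _ hk
        simp [hk]
  have eval2 : S = (if m = 1 then bernoulli (n + 1) else 0) - ((n : ℚ) + 1) * bernoulli (n + m) := by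
    have h1 : ∀ k ∈ range (n + 2),
        ((n + 1).choose k : ℚ) * (∑ i ∈ range (k + 1), (k.choose i : ℚ) * bernoulli i)
            * DD m (n + 1 - k)
          = ∑ i ∈ range (k + 1),
              ((n + 1).choose k : ℚ) * (k.choose i : ℚ) * bernoulli i * DD m (n + 1 - k) := by
      intro k _
      rw [Finset.mul_sum, Finset.sum_mul]
      exact Finset.sum_congr rfl fun i _ => by ring
    rw [hS, Finset.sum_congr rfl h1,
      tri (fun k i => ((n + 1).choose k : ℚ) * (k.choose i : ℚ) * bernoulli i * DD m (n + 1 - k)) (n + 2)]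
    have h2 : ∀ i ∈ range (n + 2),
        ∑ l ∈ range (n + 2 - i),
            ((n + 1).choose (i + l) : ℚ) * ((i + l).choose i : ℚ) * bernoulli i
              * DD m (n + 1 - (i + l))
          = ((n + 1).choose i : ℚ) * bernoulli i
              * ((if (n + 1 - i) + m = 1 then 1 else 0) - DD (n + 1 - i) m) := by
      intro i hi
      rw [mem_range] at hi
      have h3 : ∀ l ∈ range (n + 2 - i),
          ((n + 1).choose (i + l) : ℚ) * ((i + l).choose i : ℚ) * bernoulli i
              * DD m (n + 1 - (i + l))
            = (((n + 1).choose i : ℚ) * bernoulli i)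
              * (((n + 1 - i).choose l : ℚ) * DD m ((n + 1 - i) - l)) := by
        intro l hl
        rw [mem_range] at hl
        have hle : i + l ≤ n + 1 := by omega
        have hc := Nat.choose_mul (n := n + 1) (k := i + l) (s := i) (Nat.le_add_right i l)
        rw [Nat.add_sub_cancel_left] at hc
        have hcq : ((n + 1).choose (i + l) : ℚ) * ((i + l).choose i : ℚ)
            = ((n + 1).choose i : ℚ) * ((n + 1 - i).choose l : ℚ) := by
          exact_mod_cast congrArg (fun x : ℕ => (x : ℚ)) hc
        have hsub : n + 1 - (i + l) = (n + 1 - i) - l := by omega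
        rw [hsub, hcq]; ring
      rw [Finset.sum_congr rfl h3, ← Finset.mul_sum]
      congr 1
      have h4 : n + 2 - i = (n + 1 - i) + 1 := by omega
      rw [h4]
      -- T q = δ − DD q m, with q := n + 1 - i
      set q := n + 1 - i with hq
      have hrefl : ∑ l ∈ range (q + 1), ((q.choose l : ℚ) * DD m (q - l))
          = ∑ l ∈ range (q + 1), ((q.choose l : ℚ) * DD m l) := by
        rw [← Finset.sum_range_reflect (fun l => (q.choose l : ℚ) * DD m l) (q + 1)]
        refine Finset.sum_congr rfl fun l hl => ?_
        rw [mem_range] at hl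
        have e1 : q + 1 - 1 - l = q - l := by omega
        have e2 : q.choose (q - l) = q.choose l := Nat.choose_symm (by omega)
        rw [e1, e2]
      have hexp : ∀ l ∈ range (q + 1),
          (q.choose l : ℚ) * DD m l
            = ∑ s ∈ range m, (q.choose l : ℚ) * (m.choose s : ℚ) * bernoulli (l + s) := by
        intro l _
        unfold DD
        rw [Finset.mul_sum]
        exact Finset.sum_congr rfl fun s _ => by ring
      rw [hrefl, Finset.sum_congr rfl hexp, core1 q m]
    rw [Finset.sum_congr rfl h2]
    have h5 : ∀ i ∈ range (n + 2),
        ((n + 1).choose i : ℚ) * bernoulli i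
            * ((if (n + 1 - i) + m = 1 then 1 else 0) - DD (n + 1 - i) m)
          = ((n + 1).choose i : ℚ) * bernoulli i * (if (n + 1 - i) + m = 1 then 1 else 0)
            - ((n + 1).choose i : ℚ) * bernoulli i * DD (n + 1 - i) m := by
      intro i _; ring
    rw [Finset.sum_congr rfl h5, Finset.sum_sub_distrib]
    congr 1
    · by_cases hm1 : m = 1
      · subst hm1
        rw [Finset.sum_eq_single_of_mem (n + 1) (by rw [mem_range]; omega)]
        · simp
        · intro k hk hne
          rw [mem_range] at hk
          have : ¬ ((n + 1 - k) + 1 = 1) := by omega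
          rw [if_neg this, mul_zero]
      · rw [if_neg hm1]
        refine Finset.sum_eq_zero fun i hi => ?_
        have : ¬ ((n + 1 - i) + m = 1) := by omega
        rw [if_neg this, mul_zero]
    · obtain ⟨m', rfl⟩ : ∃ m', m = m' + 1 := ⟨m - 1, by omega⟩
      have := core2 (n + 1) m'
      have harg : n + 1 + m' = n + (m' + 1) := by omega
      rw [harg] at this
      rw [this]
      push_cast; ring
  have := eval1.symm.trans eval2
  rw [AA_eq]
  linarith [this]

private lemma DD_pascal (b q : ℕ) : DD (b + 1) q = AA b q + DD b (q + 1) := by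
  have h := pascal_sum b (fun i => bernoulli (q + i))
  have hL : ∑ i ∈ range (b + 2), ((b + 1).choose i : ℚ) * bernoulli (q + i)
      = DD (b + 1) q + bernoulli (q + (b + 1)) := by
    rw [Finset.sum_range_succ, Nat.choose_self]
    unfold DD
    push_cast; ring
  have hR2 : ∑ i ∈ range (b + 1), (b.choose i : ℚ) * bernoulli (q + (i + 1))
      = AA b (q + 1) := by
    unfold AA
    exact Finset.sum_congr rfl fun i _ => by rw [show q + (i + 1) = q + 1 + i by omega]
  rw [hL, hR2] at h
  have hAA : AA b (q + 1) = DD b (q + 1) + bernoulli (q + 1 + b) := AA_eq b (q + 1)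
  have harg : q + 1 + b = q + (b + 1) := by omega
  rw [hAA, harg] at h
  have : ∑ i ∈ range (b + 1), (b.choose i : ℚ) * bernoulli (q + i) = AA b q := rfl
  rw [this] at h
  linarith [h]

/-- The extended Bernoulli numbers `C m n` (defined for `m, n ≥ 1` by `C 1 n = Bₙ` and the
recursion `C (m+1) n = (n/(n+1)) ⬝ C m (n+1) − (1/(n+1)) ∑_{k=1}^{n} (n+1 choose k) Bₖ C m (n−k+1)`)
can be expressed via the classical Bernoulli numbers:
`C m n = ∑_{k=0}^{m-1} (m choose k) ⬝ B_{n+k}`. -/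
theorem extended_bernoulli_eq_sum_choose_bernoulli (C : ℕ → ℕ → ℚ)
    (hbase : ∀ n, 1 ≤ n → C 1 n = bernoulli n)
    (hrec : ∀ m n, 1 ≤ m → 1 ≤ n →
      C (m + 1) n = (n / (n + 1) : ℚ) * C m (n + 1)
        - (1 / (n + 1) : ℚ) * ∑ k ∈ Finset.Icc 1 n,
            ((n + 1).choose k : ℚ) * bernoulli k * C m (n - k + 1))
    (m n : ℕ) (hm : 1 ≤ m) (hn : 1 ≤ n) :
    C m n = ∑ k ∈ Finset.range m, (m.choose k : ℚ) * bernoulli (n + k) := by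
  have main : ∀ M, 1 ≤ M → ∀ N, 1 ≤ N → C M N = DD M N := by
    intro M hM
    induction M, hM using Nat.le_induction with
    | base =>
        intro N hN
        rw [hbase N hN]
        simp [DD]
    | succ M hM ih =>
        intro N hN
        rw [hrec M N hM hN]
        have hC1 : C M (N + 1) = DD M (N + 1) := ih (N + 1) (by omega)
        have hCk : ∀ k ∈ Finset.Icc 1 N,
            ((N + 1).choose k : ℚ) * bernoulli k * C M (N - k + 1)
              = ((N + 1).choose k : ℚ) * bernoulli k * DD M (N - k + 1) := by
          intro k hk
          rw [Finset.mem_Icc] at hk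
          rw [ih (N - k + 1) (by omega)]
        rw [hC1, Finset.sum_congr rfl hCk]
        have hV := Vp M N hM
        have hins : Finset.range (N + 1) = insert 0 (Finset.Icc 1 N) := by
          ext x
          simp only [Finset.mem_range, Finset.mem_insert, Finset.mem_Icc]
          omega
        rw [hins, Finset.sum_insert (by simp)] at hV
        have hg0 : ((N + 1).choose 0 : ℚ) * bernoulli 0 * DD M (N + 1 - 0) = DD M (N + 1) := by
          simp
        rw [hg0] at hV
        have hconv : ∑ k ∈ Finset.Icc 1 N,
            ((N + 1).choose k : ℚ) * bernoulli k * DD M (N + 1 - k)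
              = ∑ k ∈ Finset.Icc 1 N,
            ((N + 1).choose k : ℚ) * bernoulli k * DD M (N - k + 1) := by
          refine Finset.sum_congr rfl fun k hk => ?_
          rw [Finset.mem_Icc] at hk
          rw [show N + 1 - k = N - k + 1 by omega]
        rw [hconv] at hV
        have hsum : ∑ k ∈ Finset.Icc 1 N,
            ((N + 1).choose k : ℚ) * bernoulli k * DD M (N - k + 1)
              = -((N : ℚ) + 1) * AA M N - DD M (N + 1) := by linarith [hV]
        rw [hsum, DD_pascal]
        have hne : ((N : ℚ) + 1) ≠ 0 := by positivity
        field_simp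
        ring
  have h := main m hm n hn
  rw [h]
  rfl
end

section
/- Let f ∈ ℂ[[λ,μ]] be symmetric (f(λ,μ) = f(μ,λ)), set f̃ = 1 + λμ·f, and let F = Even(f̃) and O = Odd(f) denote the even and odd parts. Then f̃ satisfies (λ+μ)·f̃(λ,μ) = λ·e^{μ}·f̃(μ,−λ−μ) + μ·e^{−λ}·f̃(λ,−λ−μ) if and only if both of the following hold in ℂ[[λ,μ]]: (i) (λ+μ)·F(λ,μ) = λ·e^{μ}·F(μ,−λ−μ) + μ·e^{−λ}·F(λ,−λ−μ), and (ii) O(λ,μ) + e^{μ}·O(μ,−λ−μ) + e^{−λ}·O(λ,−λ−μ) = 0. -/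
noncomputable section

open Finset MvPowerSeries

/-- Total degree of a monomial in two variables. -/
def deg (d : Fin 2 →₀ ℕ) : ℕ := d 0 + d 1

/-- Formal substitution `f(p, q)` of two polynomials `p`, `q` with zero constant term
for the variables of a two-variable formal power series `f`: the coefficient of a
monomial `d` in `f(p,q)` is `∑_{i,j} (coeff of λ^i μ^j in f) ⬝ (coeff of d in pⁱ·qʲ)`,
a finite sum since `coeff d (pⁱ·qʲ) = 0` whenever `i + j > deg d`. -/
def sub2 (p q : MvPolynomial (Fin 2) ℂ) (f : MvPowerSeries (Fin 2) ℂ) :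
    MvPowerSeries (Fin 2) ℂ :=
  fun d => ∑ ij ∈ Finset.range (deg d + 1) ×ˢ Finset.range (deg d + 1),
    MvPowerSeries.coeff (Finsupp.single 0 ij.1 + Finsupp.single 1 ij.2) f *
      MvPolynomial.coeff d (p ^ ij.1 * q ^ ij.2)

/-- The formal exponential `exp g = ∑ₖ gᵏ/k!` of a two-variable formal power series `g`
with zero constant term. -/
def expMv (g : MvPowerSeries (Fin 2) ℂ) : MvPowerSeries (Fin 2) ℂ :=
  fun d => ∑ k ∈ Finset.range (deg d + 1), MvPowerSeries.coeff d (g ^ k) / (k.factorial : ℂ)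

/-- `f(μ, −λ−μ)`. -/
def s₁ (f : MvPowerSeries (Fin 2) ℂ) : MvPowerSeries (Fin 2) ℂ :=
  sub2 (MvPolynomial.X 1) (-MvPolynomial.X 0 - MvPolynomial.X 1) f

/-- `f(λ, −λ−μ)`. -/
def s₂ (f : MvPowerSeries (Fin 2) ℂ) : MvPowerSeries (Fin 2) ℂ :=
  sub2 (MvPolynomial.X 0) (-MvPolynomial.X 0 - MvPolynomial.X 1) f

/-- `f(μ, λ)`. -/
def swapS (f : MvPowerSeries (Fin 2) ℂ) : MvPowerSeries (Fin 2) ℂ :=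
  sub2 (MvPolynomial.X 1) (MvPolynomial.X 0) f

/-- `f(−λ, −μ)`. -/
def negS (f : MvPowerSeries (Fin 2) ℂ) : MvPowerSeries (Fin 2) ℂ :=
  sub2 (-MvPolynomial.X 0) (-MvPolynomial.X 1) f

/-- Equation (1.5b), the compressed hexagon equation:
`λμ(λ+μ)·( f(λ,μ) + e^{μ}·f(μ,−λ−μ) + e^{−λ}·f(λ,−λ−μ) ) = λ(e^{μ} − 1) + μ(e^{−λ} − 1)`. -/
def Eq15b (f : MvPowerSeries (Fin 2) ℂ) : Prop :=
  (X 0 : MvPowerSeries (Fin 2) ℂ) * X 1 * (X 0 + X 1) *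
      (f + expMv (X 1) * s₁ f + expMv (-X 0) * s₂ f)
    = X 0 * (expMv (X 1) - 1) + X 1 * (expMv (-X 0) - 1)

/-- Even part `(f(λ,μ) + f(−λ,−μ))/2`. -/
def evenPart (f : MvPowerSeries (Fin 2) ℂ) : MvPowerSeries (Fin 2) ℂ :=
  (1 / 2 : ℂ) • (f + negS f)

/-- Odd part `(f(λ,μ) − f(−λ,−μ))/2`. -/
def oddPart (f : MvPowerSeries (Fin 2) ℂ) : MvPowerSeries (Fin 2) ℂ :=
  (1 / 2 : ℂ) • (f - negS f)

/-! Put `L g = (λ+μ)·g − λe^{μ}·g(μ,−λ−μ) − μe^{−λ}·g(λ,−λ−μ)` (`hexagonDefect g`), so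
the equation for `f̃` reads `L f̃ = 0`; `L` is additive. As `f̃ = 1 + λμ·f`, its even and odd
parts give `f̃ = F + λμ·O` and `f̃(−λ,−μ) = F − λμ·O`. The substitution `(λ,μ) ↦ (−μ,−λ)` turns
`L g` into `−L (g(−λ,−μ))` when `g` is symmetric, so `L f̃ = 0` also gives `L (f̃(−λ,−μ)) = 0`;
adding and subtracting yields `L F = 0` and `L (λμ·O) = 0`. Finally
`L (λμ·h) = λμ(λ+μ)·(h + e^{μ}·h(μ,−λ−μ) + e^{−λ}·h(λ,−λ−μ))` and `ℂ[[λ,μ]]` is a domain.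

To compute with the substitutions, `sub2` is identified with `MvPowerSeries.subst` and `expMv g`
with `PowerSeries.exp` substituted at `g`; these are algebra maps and compose. -/

namespace MvPowerSeries

variable {σ τ R : Type*} [CommRing R]

lemma coeff_prod_pow_eq_zero_of_degree_lt {a : σ → MvPowerSeries τ R}
    (ha : ∀ s, constantCoeff (a s) = 0) {d : σ →₀ ℕ} {e : τ →₀ ℕ} (h : e.degree < d.degree) :
    coeff e (d.prod fun s n => a s ^ n) = 0 := by
  apply coeff_of_lt_order
  calc (e.degree : ℕ∞) < d.degree := by exact_mod_cast h
    _ = ∑ s ∈ d.support, (d s : ℕ∞) := by rw [Finsupp.degree_apply, Nat.cast_sum]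
    _ ≤ ∑ s ∈ d.support, (a s ^ d s).order :=
      sum_le_sum fun s _ => le_order_pow_of_constantCoeff_eq_zero _ (ha s)
    _ ≤ _ := le_order_prod _ _

lemma subst_neg {a : σ → MvPowerSeries τ R} (ha : HasSubst a) (f : MvPowerSeries σ R) :
    subst a (-f) = -subst a f := by
  rw [← substAlgHom_apply ha, map_neg, substAlgHom_apply]

lemma hasSubst_of_fin_two {a b : MvPowerSeries τ R} (ha : constantCoeff a = 0)
    (hb : constantCoeff b = 0) : HasSubst ![a, b] :=
  hasSubst_of_constantCoeff_zero (Fin.forall_fin_two.2 ⟨ha, hb⟩)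

lemma subst_subst_of_fin_two {υ : Type*} {a : Fin 2 → MvPowerSeries τ R}
    {b : τ → MvPowerSeries υ R}
    (ha : HasSubst a) (hb : HasSubst b) (f : MvPowerSeries (Fin 2) R) :
    subst b (subst a f) = subst ![subst b (a 0), subst b (a 1)] f := by
  rw [subst_comp_subst_apply ha hb]
  congr 1
  ext1 s
  fin_cases s <;> rfl

lemma subst_one_add_X0_mul_X1_mul {a : Fin 2 → MvPowerSeries (Fin 2) R} (ha : HasSubst a)
    (h : a 0 * a 1 = X 0 * X 1) (f : MvPowerSeries (Fin 2) R) :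
    subst a (1 + X 0 * X 1 * f) = 1 + X 0 * X 1 * subst a f := by
  rw [← substAlgHom_apply ha, map_add, map_one, map_mul, map_mul, substAlgHom_X, substAlgHom_X, h,
    substAlgHom_apply]

end MvPowerSeries

lemma MvPolynomial.constantCoeff_coe {σ R : Type*} [CommRing R] (p : MvPolynomial σ R) :
    MvPowerSeries.constantCoeff (p : MvPowerSeries σ R) = constantCoeff p := by
  rw [← coeff_zero_eq_constantCoeff_apply, coeff_coe, constantCoeff_eq]

lemma degree_eq_deg (d : Fin 2 →₀ ℕ) : d.degree = deg d := by
  simp [Finsupp.degree_eq_sum, Fin.sum_univ_two, deg]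

lemma prod_pow_single_add_single {R : Type*} [CommRing R] (a : Fin 2 → R) (i j : ℕ) :
    (Finsupp.single (0 : Fin 2) i + Finsupp.single 1 j).prod (fun s n => a s ^ n)
      = a 0 ^ i * a 1 ^ j := by
  rw [Finsupp.prod_fintype _ _ fun _ => pow_zero _, Fin.prod_univ_two]
  simp

theorem sub2_eq_subst {p q : MvPolynomial (Fin 2) ℂ} (hp : p.constantCoeff = 0)
    (hq : q.constantCoeff = 0) :
    sub2 p q = subst ![(p : MvPowerSeries (Fin 2) ℂ), q] := by
  have hpq : ∀ s, constantCoeff (![(p : MvPowerSeries (Fin 2) ℂ), q] s) = 0 := by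
    simp [Fin.forall_fin_two, MvPolynomial.constantCoeff_coe, hp, hq]
  funext f
  ext e
  set ι : ℕ × ℕ → (Fin 2 →₀ ℕ) := fun ij => Finsupp.single 0 ij.1 + Finsupp.single 1 ij.2
  have hι : Set.InjOn ι ↑(range (deg e + 1) ×ˢ range (deg e + 1)) := by
    intro x _ y _ h
    have h0 := DFunLike.congr_fun h 0
    have h1 := DFunLike.congr_fun h 1
    simp only [ι, Finsupp.coe_add, Pi.add_apply, Finsupp.single_apply] at h0 h1
    exact Prod.ext (by simpa using h0) (by simpa using h1)
  rw [coeff_subst (hasSubst_of_constantCoeff_zero hpq), finsum_eq_sum_of_support_subset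
    (s := (range (deg e + 1) ×ˢ range (deg e + 1)).image ι), sum_image hι]
  · refine sum_congr rfl fun ij _ => ?_
    rw [prod_pow_single_add_single, smul_eq_mul, Matrix.cons_val_zero, Matrix.cons_val_one,
      Matrix.cons_val_zero, ← MvPolynomial.coe_pow, ← MvPolynomial.coe_pow,
      ← MvPolynomial.coe_mul, MvPolynomial.coeff_coe]
  · -- monomials of degree above `deg e` contribute nothing, as `p`, `q` have no constant term
    intro d hd
    have hde : d.degree ≤ e.degree := by
      by_contra! h
      exact hd (by simp only [coeff_prod_pow_eq_zero_of_degree_lt hpq h, smul_zero])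
    rw [degree_eq_deg, degree_eq_deg, deg] at hde
    simp only [coe_image, coe_product, coe_range, Set.mem_image, Set.mem_prod, Set.mem_Iio]
    refine ⟨(d 0, d 1), ⟨by omega, by omega⟩, ?_⟩
    ext s
    fin_cases s <;> simp [ι]

theorem expMv_eq_subst_exp {g : MvPowerSeries (Fin 2) ℂ} (hg : constantCoeff g = 0) :
    expMv g = PowerSeries.subst g (PowerSeries.exp ℂ) := by
  ext e
  rw [PowerSeries.coeff_subst (PowerSeries.HasSubst.of_constantCoeff_zero hg),
    finsum_eq_sum_of_support_subset (M := ℂ) (s := range (deg e + 1))]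
  · show ∑ k ∈ range (deg e + 1), coeff e (g ^ k) / (k.factorial : ℂ) = _
    refine sum_congr rfl fun k _ => ?_
    rw [PowerSeries.coeff_exp, Algebra.smul_def, eq_ratCast, one_div, Rat.cast_inv,
      Rat.cast_natCast, Algebra.algebraMap_self, RingHom.id_apply, inv_mul_eq_div]
  · intro k hk
    rw [coe_range, Set.mem_Iio]
    by_contra! hke
    refine hk ?_
    dsimp only
    rw [coeff_of_lt_order, smul_zero]
    calc ((e.degree : ℕ) : ℕ∞) < k := by rw [degree_eq_deg]; exact_mod_cast hke
      _ ≤ _ := le_order_pow_of_constantCoeff_eq_zero k hg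

theorem subst_expMv {a : Fin 2 → MvPowerSeries (Fin 2) ℂ} (ha : ∀ s, constantCoeff (a s) = 0)
    {g : MvPowerSeries (Fin 2) ℂ} (hg : constantCoeff g = 0) :
    subst a (expMv g) = expMv (subst a g) := by
  have ha' : HasSubst a := hasSubst_of_constantCoeff_zero ha
  rw [expMv_eq_subst_exp hg, expMv_eq_subst_exp (constantCoeff_subst_eq_zero ha' ha hg),
    PowerSeries.subst, PowerSeries.subst,
    subst_comp_subst_apply (PowerSeries.HasSubst.of_constantCoeff_zero hg).const ha']

lemma s₁_eq_subst : s₁ = subst ![X 1, -X 0 - X 1] := by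
  ext1 g
  rw [s₁, sub2_eq_subst (by simp) (by simp)]
  simp only [← MvPolynomial.coeToMvPowerSeries.ringHom_apply, map_sub, map_neg]
  simp only [MvPolynomial.coeToMvPowerSeries.ringHom_apply, MvPolynomial.coe_X]

lemma s₂_eq_subst : s₂ = subst ![X 0, -X 0 - X 1] := by
  ext1 g
  rw [s₂, sub2_eq_subst (by simp) (by simp)]
  simp only [← MvPolynomial.coeToMvPowerSeries.ringHom_apply, map_sub, map_neg]
  simp only [MvPolynomial.coeToMvPowerSeries.ringHom_apply, MvPolynomial.coe_X]

lemma swapS_eq_subst : swapS = subst ![X 1, X 0] := by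
  ext1 g
  rw [swapS, sub2_eq_subst (by simp) (by simp)]
  simp only [MvPolynomial.coe_X]

lemma negS_eq_subst : negS = subst ![-X 0, -X 1] := by
  ext1 g
  rw [negS, sub2_eq_subst (by simp) (by simp)]
  simp only [← MvPolynomial.coeToMvPowerSeries.ringHom_apply, map_neg]
  simp only [MvPolynomial.coeToMvPowerSeries.ringHom_apply, MvPolynomial.coe_X]

lemma hasSubst_s₁ : HasSubst ![(X 1 : MvPowerSeries (Fin 2) ℂ), -X 0 - X 1] :=
  hasSubst_of_fin_two (by simp) (by simp)

lemma hasSubst_s₂ : HasSubst ![(X 0 : MvPowerSeries (Fin 2) ℂ), -X 0 - X 1] :=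
  hasSubst_of_fin_two (by simp) (by simp)

lemma hasSubst_swapS : HasSubst ![(X 1 : MvPowerSeries (Fin 2) ℂ), X 0] :=
  hasSubst_of_fin_two (by simp) (by simp)

lemma hasSubst_negS : HasSubst ![(-X 0 : MvPowerSeries (Fin 2) ℂ), -X 1] :=
  hasSubst_of_fin_two (by simp) (by simp)

lemma hasSubst_negSwap : HasSubst ![(-X 1 : MvPowerSeries (Fin 2) ℂ), -X 0] :=
  hasSubst_of_fin_two (by simp) (by simp)

section Parity

variable (g : MvPowerSeries (Fin 2) ℂ)

lemma evenPart_add_oddPart : evenPart g + oddPart g = g := by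
  rw [evenPart, oddPart]
  module

lemma evenPart_sub_oddPart : evenPart g - oddPart g = negS g := by
  rw [evenPart, oddPart]
  module

lemma oddPart_one_add_X0_mul_X1_mul :
    oddPart (1 + X 0 * X 1 * g) = X 0 * X 1 * oddPart g := by
  rw [oddPart, oddPart, negS_eq_subst, subst_one_add_X0_mul_X1_mul hasSubst_negS (by simp),
    mul_smul_comm]
  congr 1
  ring

end Parity

def hexagonDefect (g : MvPowerSeries (Fin 2) ℂ) : MvPowerSeries (Fin 2) ℂ :=
  (X 0 + X 1) * g - (X 0 * expMv (X 1) * s₁ g + X 1 * expMv (-X 0) * s₂ g)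

section HexagonDefect

variable (g h : MvPowerSeries (Fin 2) ℂ)

lemma hexagonDefect_eq_zero_iff : hexagonDefect g = 0 ↔
    (X 0 + X 1) * g = X 0 * expMv (X 1) * s₁ g + X 1 * expMv (-X 0) * s₂ g :=
  sub_eq_zero

lemma hexagonDefect_add : hexagonDefect (g + h) = hexagonDefect g + hexagonDefect h := by
  simp only [hexagonDefect, s₁_eq_subst, s₂_eq_subst, subst_add hasSubst_s₁,
    subst_add hasSubst_s₂]
  ring

lemma hexagonDefect_sub : hexagonDefect (g - h) = hexagonDefect g - hexagonDefect h := by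
  simp only [hexagonDefect, s₁_eq_subst, s₂_eq_subst, subst_sub hasSubst_s₁,
    subst_sub hasSubst_s₂]
  ring

lemma hexagonDefect_X0_mul_X1_mul : hexagonDefect (X 0 * X 1 * h) =
    X 0 * X 1 * (X 0 + X 1) * (h + expMv (X 1) * s₁ h + expMv (-X 0) * s₂ h) := by
  simp only [hexagonDefect, s₁_eq_subst, s₂_eq_subst, subst_mul hasSubst_s₁,
    subst_mul hasSubst_s₂, subst_X hasSubst_s₁, subst_X hasSubst_s₂,
    Matrix.cons_val_zero, Matrix.cons_val_one]
  ring

lemma hexagonDefect_X0_mul_X1_mul_eq_zero_iff : hexagonDefect (X 0 * X 1 * h) = 0 ↔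
    h + expMv (X 1) * s₁ h + expMv (-X 0) * s₂ h = 0 := by
  have hX (i : Fin 2) : (X i : MvPowerSeries (Fin 2) ℂ) ≠ 0 := fun h0 => by
    simpa using congrArg (coeff (Finsupp.single i 1)) h0
  have hX₀X₁ : (X 0 + X 1 : MvPowerSeries (Fin 2) ℂ) ≠ 0 := fun h0 => by
    simpa [coeff_X, Finsupp.single_eq_single_iff] using congrArg (coeff (Finsupp.single 0 1)) h0
  rw [hexagonDefect_X0_mul_X1_mul, mul_eq_zero,
    or_iff_right (mul_ne_zero (mul_ne_zero (hX 0) (hX 1)) hX₀X₁)]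

lemma subst_neg_swap_hexagonDefect {g : MvPowerSeries (Fin 2) ℂ} (hg : swapS g = g) :
    subst ![-X 1, -X 0] (hexagonDefect g) = -hexagonDefect (negS g) := by
  have hρ := hasSubst_negSwap
  have h₀ : subst ![-X 1, -X 0] g = negS g := by
    conv_lhs => rw [← hg]
    rw [swapS_eq_subst, negS_eq_subst, subst_subst_of_fin_two hasSubst_swapS hρ]
    simp [subst_X hρ]
  have h₁ : subst ![-X 1, -X 0] (s₁ g) = s₂ (negS g) := by
    rw [s₁_eq_subst, s₂_eq_subst, negS_eq_subst, subst_subst_of_fin_two hasSubst_s₁ hρ,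
      subst_subst_of_fin_two hasSubst_negS hasSubst_s₂]
    simp [subst_X hρ, subst_neg hρ, subst_sub hρ, subst_X hasSubst_s₂, subst_neg hasSubst_s₂]
  have h₂ : subst ![-X 1, -X 0] (s₂ g) = s₁ (negS g) := by
    rw [s₁_eq_subst, s₂_eq_subst, negS_eq_subst, subst_subst_of_fin_two hasSubst_s₂ hρ,
      subst_subst_of_fin_two hasSubst_negS hasSubst_s₁]
    simp [subst_X hρ, subst_neg hρ, subst_sub hρ, subst_X hasSubst_s₁, subst_neg hasSubst_s₁]
  have e₁ : subst ![-X 1, -X 0] (expMv (X 1)) = expMv (-X 0) := by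
    rw [subst_expMv (by simp [Fin.forall_fin_two]) (by simp), subst_X hρ]
    rfl
  have e₂ : subst ![-X 1, -X 0] (expMv (-X 0)) = expMv (X 1) := by
    rw [subst_expMv (by simp [Fin.forall_fin_two]) (by simp), subst_neg hρ, subst_X hρ]
    simp
  simp only [hexagonDefect, subst_sub hρ, subst_add hρ, subst_mul hρ, subst_X hρ, h₀, h₁, h₂, e₁,
    e₂, Matrix.cons_val_zero, Matrix.cons_val_one, Matrix.cons_val_fin_one]
  ring

lemma hexagonDefect_negS_eq_zero {g : MvPowerSeries (Fin 2) ℂ} (hg : swapS g = g)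
    (h : hexagonDefect g = 0) : hexagonDefect (negS g) = 0 := by
  rw [← neg_eq_zero, ← subst_neg_swap_hexagonDefect hg, h, ← substAlgHom_apply hasSubst_negSwap,
    map_zero]

end HexagonDefect

/-- for symmetric `f`, `f̃ = 1 + λμ·f`, `F = Even(f̃)`, `O = Odd(f)`:
the equation `(λ+μ)·f̃ = λe^{μ}·f̃(μ,−λ−μ) + μe^{−λ}·f̃(λ,−λ−μ)` holds iff both
`(λ+μ)·F = λe^{μ}·F(μ,−λ−μ) + μe^{−λ}·F(λ,−λ−μ)` and
`O + e^{μ}·O(μ,−λ−μ) + e^{−λ}·O(λ,−λ−μ) = 0` hold. -/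
theorem eq44_iff_even_odd (f ft F O : MvPowerSeries (Fin 2) ℂ)
    (hf : swapS f = f) (hft : ft = 1 + X 0 * X 1 * f)
    (hF : F = evenPart ft) (hO : O = oddPart f) :
    (((X 0 : MvPowerSeries (Fin 2) ℂ) + X 1) * ft
        = X 0 * expMv (X 1) * s₁ ft + X 1 * expMv (-X 0) * s₂ ft)
      ↔ ((((X 0 : MvPowerSeries (Fin 2) ℂ) + X 1) * F
            = X 0 * expMv (X 1) * s₁ F + X 1 * expMv (-X 0) * s₂ F) ∧
          (O + expMv (X 1) * s₁ O + expMv (-X 0) * s₂ O = 0)) := by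
  have hsymm : swapS ft = ft := by
    rw [hft, swapS_eq_subst, subst_one_add_X0_mul_X1_mul hasSubst_swapS (by simp [mul_comm]),
      ← swapS_eq_subst, hf]
  have hodd : oddPart ft = X 0 * X 1 * O := by rw [hO, hft, oddPart_one_add_X0_mul_X1_mul]
  have hplus : ft = F + X 0 * X 1 * O := by rw [hF, ← hodd, evenPart_add_oddPart]
  have hminus : negS ft = F - X 0 * X 1 * O := by rw [hF, ← hodd, evenPart_sub_oddPart]
  rw [← hexagonDefect_eq_zero_iff, ← hexagonDefect_eq_zero_iff,
    ← hexagonDefect_X0_mul_X1_mul_eq_zero_iff]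
  constructor
  · intro h
    have h' := hexagonDefect_negS_eq_zero hsymm h
    rw [hplus, hexagonDefect_add] at h
    rw [hminus, hexagonDefect_sub] at h'
    have hF0 : hexagonDefect F = 0 := by
      have h2 : (2 : ℂ) • hexagonDefect F = 0 := by
        rw [two_smul]
        linear_combination h + h'
      exact (smul_eq_zero.mp h2).resolve_left two_ne_zero
    exact ⟨hF0, by linear_combination h - hF0⟩
  · rintro ⟨hF0, hO0⟩
    rw [hplus, hexagonDefect_add, hF0, hO0, add_zero]
end
end
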